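/- arXiv:quant-ph/0701020 — 6 statements merged into one kernel-verified Lean document; each statement's English description precedes it below -/
import Mathlib

section
/- Let P ≥ 1, and let 𝓗_C = (c_{j,l}) be a J×L model matrix and 𝓗_D = (d_{k,l}) a K×L model matrix, both with entries in [P_∞] := ZMod P ∪ {∞}. Let H_C and H_D be the associated binary QC-LDPC matrices (whose blocks are the circulant permutation matrices I(c_{j,l}) and I(d_{k,l}) of size P). Then H_C · H_D^T = 0 over F_2 (the twisted condition (T), equivalently every row of H_D is orthogonal to every row of H_C) if and only if for every row index j of 𝓗_C and every row index k of 𝓗_D, the vector c_j − d_k = (c_{j,0} − d_{k,0}, …, c_{j,L−1} − d_{k,L−1}) is multiplicity even. -/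
open Matrix

/-- The circulant permutation matrix `I(b)` of size `P` over `F₂`:
its `(j,l)` entry is `1` iff `l - j ≡ b (mod P)`. -/
def circPerm (P : ℕ) (b : ZMod P) : Matrix (Fin P) (Fin P) (ZMod 2) :=
  Matrix.of fun j l => if ((l : ℕ) : ZMod P) - ((j : ℕ) : ZMod P) = b then 1 else 0

/-- The matrix `I(x)` for `x ∈ [P_∞] = ZMod P ∪ {∞}`, where `∞` is encoded as
`none` and `I(∞)` is the zero matrix. -/
def circPermO (P : ℕ) (x : Option (ZMod P)) : Matrix (Fin P) (Fin P) (ZMod 2) :=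
  match x with
  | none => 0
  | some b => circPerm P b

/-- The minus operation on `[P_∞] = ZMod P ∪ {∞}`. -/
def osub {P : ℕ} (x y : Option (ZMod P)) : Option (ZMod P) :=
  match x, y with
  | some a, some b => some (a - b)
  | _, _ => none

/-- The QC-LDPC matrix associated with a model matrix with entries in
`[P_∞] = ZMod P ∪ {∞}`: the `(j,l)` block is `I(c j l)`. -/
def qcMatrix {P : ℕ} {R C : Type*} (c : R → C → Option (ZMod P)) :
    Matrix (R × Fin P) (C × Fin P) (ZMod 2) :=
  Matrix.of fun r s => circPermO P (c r.1 s.1) r.2 s.2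

/-- A vector over `[P_∞]` is multiplicity even if every element of `ZMod P`
occurs an even number of times among its entries (occurrences of `∞` are
ignored). -/
def MultEvenO {P L : ℕ} (v : Fin L → Option (ZMod P)) : Prop :=
  ∀ z : ZMod P, Even (Finset.univ.filter (fun l => v l = some z)).card


lemma entry_sum (P : ℕ) [NeZero P] (x y : Option (ZMod P)) (p q : Fin P) :
    ∑ r : Fin P, circPermO P x p r * circPermO P y q r
      = if osub x y = some (((q : ℕ) : ZMod P) - ((p : ℕ) : ZMod P)) then 1 else 0 := by
  match x, y with
  | none, _ => simp [circPermO, osub]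
  | some a, none => simp [circPermO, osub]
  | some a, some b =>
    simp only [circPermO, circPerm, osub, Matrix.of_apply, Option.some.injEq]
    set r0 : Fin P := ⟨(a + ((p : ℕ) : ZMod P)).val, ZMod.val_lt _⟩ with hr0
    have hcast : ((r0 : ℕ) : ZMod P) = a + ((p : ℕ) : ZMod P) := by
      simp [hr0, ZMod.natCast_val, ZMod.cast_id]
    rw [Finset.sum_eq_single r0]
    · rw [hcast]
      have h1 : a + ((p : ℕ) : ZMod P) - ((p : ℕ) : ZMod P) = a := by ring
      rw [if_pos h1, one_mul]
      have h2 : (a + ((p : ℕ) : ZMod P) - ((q : ℕ) : ZMod P) = b) ↔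
          (a - b = ((q : ℕ) : ZMod P) - ((p : ℕ) : ZMod P)) := by
        constructor <;> intro h <;> linear_combination h
      exact if_congr h2 rfl rfl
    · intro r _ hr
      rcases eq_or_ne (((r : ℕ) : ZMod P) - ((p : ℕ) : ZMod P)) a with h | h
      · exfalso
        apply hr
        have hre : ((r : ℕ) : ZMod P) = ((r0 : ℕ) : ZMod P) := by
          rw [hcast, ← h]; ring
        have := congrArg ZMod.val hre
        rwa [ZMod.val_natCast_of_lt r.isLt, ZMod.val_natCast_of_lt r0.isLt,
          Fin.val_inj] at this
      · simp [h]
    · simp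

/-- the twisted condition `H_C · H_Dᵀ = 0` holds if and only if
for every row `c_j` of the model matrix of `H_C` and every row `d_k` of the
model matrix of `H_D`, the vector `c_j − d_k` is multiplicity even. -/
theorem twisted_iff_multiplicity_even (P J K L : ℕ) (hP : 1 ≤ P)
    (c : Fin J → Fin L → Option (ZMod P)) (d : Fin K → Fin L → Option (ZMod P)) :
    qcMatrix c * (qcMatrix d)ᵀ = 0 ↔
      ∀ (j : Fin J) (k : Fin K), MultEvenO (fun l => osub (c j l) (d k l)) := by
  haveI : NeZero P := ⟨by omega⟩
  have hentry : ∀ (j : Fin J) (k : Fin K) (p q : Fin P),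
      (qcMatrix c * (qcMatrix d)ᵀ) (j, p) (k, q)
        = ((Finset.univ.filter
            (fun l => osub (c j l) (d k l)
              = some (((q : ℕ) : ZMod P) - ((p : ℕ) : ZMod P)))).card : ZMod 2) := by
    intro j k p q
    rw [Matrix.mul_apply, Fintype.sum_prod_type]
    simp only [Matrix.transpose_apply, qcMatrix, Matrix.of_apply]
    calc ∑ l : Fin L, ∑ r : Fin P, circPermO P (c j l) p r * circPermO P (d k l) q r
        = ∑ l : Fin L, if osub (c j l) (d k l)
            = some (((q : ℕ) : ZMod P) - ((p : ℕ) : ZMod P)) then 1 else 0 :=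
          Finset.sum_congr rfl fun l _ => entry_sum P _ _ p q
      _ = _ := by rw [Finset.sum_boole]
  have card_even_iff : ∀ n : ℕ, ((n : ZMod 2) = 0 ↔ Even n) := by
    intro n
    rw [ZMod.natCast_eq_zero_iff, Nat.even_iff]
    omega
  constructor
  · intro h j k z
    have hq : z.val < P := ZMod.val_lt z
    set p0 : Fin P := ⟨0, by omega⟩ with hp0
    set q0 : Fin P := ⟨z.val, hq⟩ with hq0
    have key := hentry j k p0 q0
    rw [h, Matrix.zero_apply] at key
    have hz : ((q0 : ℕ) : ZMod P) - ((p0 : ℕ) : ZMod P) = z := by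
      simp [hp0, hq0, ZMod.natCast_val, ZMod.cast_id]
    rw [hz] at key
    show Even (Finset.univ.filter (fun l => osub (c j l) (d k l) = some z)).card
    exact (card_even_iff _).mp key.symm
  · intro h
    ext ⟨j, p⟩ ⟨k, q⟩
    rw [hentry j k p q, Matrix.zero_apply]
    exact (card_even_iff _).mpr
      (by simpa using h j k (((q : ℕ) : ZMod P) - ((p : ℕ) : ZMod P)))
end

section
/- Let P ≥ 1, let n ≥ 1, let T_A and T_B be tires of size n over [P_∞] := ZMod P ∪ {∞}, and let H_C and H_D be the binary QC-LDPC matrices associated with the model matrices 𝓗_C := [T_A, T_B] and 𝓗_D := [−T_B^T, −T_A^T]. Then H_C and H_D are equivalent up to position-permutation: there exist a permutation matrix P_R of size nP and a permutation matrix P_C of size 2nP such that H_C = P_R · H_D · P_C. -/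
open Matrix

/-- Negation on `[P_∞]`: computed mod `P` on `ZMod P`, and `−∞ = ∞`. -/
def oneg {P : ℕ} (x : Option (ZMod P)) : Option (ZMod P) :=
  x.map fun a => -a

/-- A tire of size `n` over `[P_∞]`. -/
def IsTire {P n : ℕ} (T : Fin n → Fin n → Option (ZMod P)) : Prop :=
  ∃ t : ZMod n → Option (ZMod P),
    ∀ j l : Fin n, T j l = t (((l : ℕ) : ZMod n) - ((j : ℕ) : ZMod n))

/-- A permutation matrix: a binary matrix with exactly one `1` in each row and
each column. -/
def IsPermMatrix {α : Type*} [Fintype α] (M : Matrix α α (ZMod 2)) : Prop :=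
  (∀ r, (Finset.univ.filter (fun s => M r s = 1)).card = 1) ∧
  (∀ s, (Finset.univ.filter (fun r => M r s = 1)).card = 1)

/-
Negating every index, both the block indices mod `n` and the positions inside a block mod `P`,
carries `H_C` onto `H_D`: a tire satisfies `T (-l) (-j) = T j l`, and `I(-b)` has a `1` at
`(-p, -q)` exactly when `I(b)` has one at `(p, q)`. The column map also swaps the two halves
`[T_A, T_B]` ↔ `[-T_Bᵀ, -T_Aᵀ]`. Reindexing rows and columns by permutations is multiplication
by permutation matrices on either side.
-/

lemma isPermMatrix_permMatrix {α : Type*} [Fintype α] [DecidableEq α] (e : Equiv.Perm α) :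
    IsPermMatrix (e.permMatrix (ZMod 2)) := by
  constructor
  · intro r
    convert Finset.card_singleton (e r)
    ext s
    simp [Equiv.Perm.permMatrix, PEquiv.toMatrix_apply, eq_comm]
  · intro s
    convert Finset.card_singleton (e.symm s)
    ext r
    simp [Equiv.Perm.permMatrix, PEquiv.toMatrix_apply, Equiv.eq_symm_apply]

lemma exists_isPermMatrix_mul_mul_of_eq_submatrix {α β : Type*} [Fintype α] [DecidableEq α]
    [Fintype β] [DecidableEq β] {A B : Matrix α β (ZMod 2)} (σ : Equiv.Perm α)
    (τ : Equiv.Perm β) (h : A = B.submatrix σ τ) :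
    ∃ (PR : Matrix α α (ZMod 2)) (PC : Matrix β β (ZMod 2)),
      IsPermMatrix PR ∧ IsPermMatrix PC ∧ A = PR * B * PC := by
  refine ⟨σ.permMatrix _, τ⁻¹.permMatrix _, isPermMatrix_permMatrix σ,
    isPermMatrix_permMatrix τ⁻¹, ?_⟩
  rw [h, Equiv.Perm.inv_def, PEquiv.toMatrix_toPEquiv_mul,
    PEquiv.mul_toMatrix_toPEquiv, submatrix_submatrix, Equiv.symm_symm]
  rfl

lemma Fin.natCast_val_neg {m : ℕ} [NeZero m] (i : Fin m) :
    (((-i : Fin m) : ℕ) : ZMod m) = -((i : ℕ) : ZMod m) := by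
  rw [Fin.val_neg', ZMod.natCast_mod, Nat.cast_sub i.isLt.le, ZMod.natCast_self, zero_sub]

lemma circPermO_oneg_apply_neg {P : ℕ} [NeZero P] (x : Option (ZMod P)) (p q : Fin P) :
    circPermO P (oneg x) (-p) (-q) = circPermO P x p q := by
  cases x with
  | none => rfl
  | some b =>
    simp only [oneg, Option.map_some, circPermO, circPerm, of_apply, Fin.natCast_val_neg]
    exact if_congr (by rw [neg_sub_neg, ← neg_sub, neg_inj]) rfl rfl

lemma IsTire.apply_neg_neg {P n : ℕ} [NeZero n] {T : Fin n → Fin n → Option (ZMod P)}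
    (hT : IsTire T) (j l : Fin n) : T (-l) (-j) = T j l := by
  obtain ⟨t, ht⟩ := hT
  rw [ht, ht, Fin.natCast_val_neg, Fin.natCast_val_neg, neg_sub_neg]

lemma qcMatrix_eq_submatrix_of_oneg {P : ℕ} [NeZero P] {R C R' C' : Type*}
    {c : R → C → Option (ZMod P)} {d : R' → C' → Option (ZMod P)} (σ : R → R') (τ : C → C')
    (h : ∀ r s, d (σ r) (τ s) = oneg (c r s)) :
    qcMatrix c = (qcMatrix d).submatrix (Prod.map σ Neg.neg) (Prod.map τ Neg.neg) := by
  ext ⟨r, p⟩ ⟨s, q⟩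
  simp only [qcMatrix, submatrix_apply, of_apply, Prod.map, h, circPermO_oneg_apply_neg]

/-- the QC-LDPC matrices `H_C`, `H_D` associated with the model
matrices `[T_A, T_B]` and `[−T_Bᵀ, −T_Aᵀ]` are equivalent up to
position-permutation: `H_C = P_R · H_D · P_C` for some permutation matrices
`P_R` (of size `nP`) and `P_C` (of size `2nP`). -/
theorem tires_codes_equivalent (P n : ℕ) (hP : 1 ≤ P) (hn : 1 ≤ n)
    (TA TB : Fin n → Fin n → Option (ZMod P)) (hA : IsTire TA) (hB : IsTire TB) :
    ∃ (PR : Matrix (Fin n × Fin P) (Fin n × Fin P) (ZMod 2))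
      (PC : Matrix ((Fin n ⊕ Fin n) × Fin P) ((Fin n ⊕ Fin n) × Fin P) (ZMod 2)),
      IsPermMatrix PR ∧ IsPermMatrix PC ∧
      qcMatrix (fun j : Fin n => Sum.elim (fun l => TA j l) (fun l => TB j l)) =
        PR * qcMatrix (fun k : Fin n =>
          Sum.elim (fun l => oneg (TB l k)) (fun l => oneg (TA l k))) * PC := by
  have : NeZero n := ⟨by omega⟩
  have : NeZero P := ⟨by omega⟩
  let σ : Equiv.Perm (Fin n) := Equiv.neg _
  let τ : Equiv.Perm (Fin n ⊕ Fin n) := (Equiv.sumComm _ _).trans (Equiv.sumCongr σ σ)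
  refine exists_isPermMatrix_mul_mul_of_eq_submatrix (σ.prodCongr (Equiv.neg _))
    (τ.prodCongr (Equiv.neg _)) (qcMatrix_eq_submatrix_of_oneg σ τ ?_)
  rintro j (l | l) <;> simp [σ, τ, hA.apply_neg_neg, hB.apply_neg_neg]
end

section
/- Let (P, σ, τ) be a perfume, let m := ord_P(σ) and L := 2m, and let 1 ≤ J, K ≤ m. Define the J×L model matrix 𝓗_C = (c_{j,l}) and the K×L model matrix 𝓗_D = (d_{k,l}) over ZMod P by: c_{j,l} := σ^{l−j} for 0 ≤ l < m and c_{j,l} := τ·σ^{l−j} for m ≤ l < L; and d_{k,l} := −τ·σ^{k−l} for 0 ≤ l < m and d_{k,l} := −σ^{k−l} for m ≤ l < L (all powers taken in (ZMod P)^×, with negative exponents meaning powers of σ^{−1}). Then for every row index j of 𝓗_C and every row index k of 𝓗_D, the vector c_j − d_k = (c_{j,0} − d_{k,0}, …, c_{j,L−1} − d_{k,L−1}) in (ZMod P)^L is multiplicity even; consequently the associated QC-LDPC matrices satisfy H_C · H_D^T = 0 over F_2, i.e., the twisted condition (T). -/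
/-!
Split the `2m` columns, `m = ord_P(σ)`, into two halves. In `c_j − d_k` the column `a` of the
first half carries `σ^(a−j) + τ σ^(k−a)` and the column `b` of the second half carries
`τ σ^(b−j) + σ^(k−b)`, exponents read modulo `m`. Hence the involution that swaps the halves and
sends `a` to `b = j + k − a` has no fixed point and preserves the entries, so every value occurs
an even number of times. Since `I(C) I(D)ᵀ = I(C − D)`, the block `(j, k)` of `H_C H_Dᵀ` is
`∑_l I(c_{j,l} − d_{k,l})`, in which every circulant occurs an even number of times.
-/

open Matrix

/-- The multiplicative order `ord_P(σ)` of `σ` modulo `P`. -/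
noncomputable def ordP (P σ : ℕ) : ℕ := orderOf ((σ : ZMod P))

def IsFulfillment (P σ : ℕ) : Prop :=
  Nat.Coprime σ P ∧ ∀ i : ℕ, 1 ≤ i → i < ordP P σ → Nat.Coprime (σ ^ i - 1) P

def IsPerfume (P σ τ : ℕ) : Prop :=
  0 < P ∧ 0 < σ ∧ 0 < τ ∧ IsFulfillment P σ ∧ Nat.Coprime τ P ∧
    ∀ i : ℕ, 1 ≤ i → i ≤ ordP P σ → (τ : ZMod P) ≠ (σ : ZMod P) ^ i

/-- The QC-LDPC matrix associated with a model matrix over `ZMod P`. -/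
def qcMatrix' {P J L : ℕ} (c : Fin J → Fin L → ZMod P) :
    Matrix (Fin J × Fin P) (Fin L × Fin P) (ZMod 2) :=
  Matrix.of fun r s => circPerm P (c r.1 s.1) r.2 s.2

def MultEven {P L : ℕ} (v : Fin L → ZMod P) : Prop :=
  ∀ z : ZMod P, Even (Finset.univ.filter (fun l => v l = z)).card

open Finset Function

theorem Finset.even_card_of_involutive {ι : Type*} {s : Finset ι} (e : ι → ι)
    (he : Involutive e) (hfix : ∀ x ∈ s, e x ≠ x) (hmem : ∀ x ∈ s, e x ∈ s) :
    Even #s := by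
  rw [← ZMod.natCast_eq_zero_iff_even, card_eq_sum_ones, Nat.cast_sum, Nat.cast_one]
  exact sum_involution (fun x _ => e x) (fun _ _ => by decide) (fun x hx _ => hfix x hx)
    hmem (fun x _ => he x)

theorem multEven_of_involutive {P L : ℕ} {v : Fin L → ZMod P} (e : Fin L → Fin L)
    (he : Involutive e) (hfix : ∀ l, e l ≠ l) (hv : ∀ l, v (e l) = v l) : MultEven v :=
  fun _ => even_card_of_involutive e he (fun l _ => hfix l) (fun l hl => by simpa [hv] using hl)

/-- `finProdFinEquiv (i, a) = i * m + a` is the column `a` of the half `i` of `Fin (2 * m)`. -/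
theorem multEven_of_swap_halves {P m : ℕ} {v : Fin (2 * m) → ZMod P} (ρ : Fin m → Fin m)
    (hρ : Involutive ρ) (hv : ∀ a, v (finProdFinEquiv (1, ρ a)) = v (finProdFinEquiv (0, a))) :
    MultEven v := by
  have hswap : Involutive (Prod.map (· + 1 : Fin 2 → Fin 2) ρ) :=
    Involutive.prodMap (fun i => by fin_cases i <;> rfl) hρ
  refine multEven_of_involutive (finProdFinEquiv ∘ Prod.map (· + 1) ρ ∘ finProdFinEquiv.symm)
    (fun l => by simp only [Function.comp_apply, Equiv.symm_apply_apply, hswap _,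
      Equiv.apply_symm_apply]) (fun l h => ?_) (fun l => ?_)
  · have hhalf := congrArg (fun l => (finProdFinEquiv.symm l).1) h
    simp only [Function.comp_apply, Equiv.symm_apply_apply, Prod.map_fst, add_eq_left] at hhalf
    exact one_ne_zero hhalf
  · obtain ⟨⟨i, a⟩, rfl⟩ := finProdFinEquiv.surjective l
    simp only [Function.comp_apply, Equiv.symm_apply_apply, Prod.map_apply]
    fin_cases i
    · exact hv a
    · simpa [hρ a] using (hv (ρ a)).symm

theorem pow_mul_pow_eq_pow_mul_pow_iff {M : Type*} [CommMonoid M] {s t : M} (h : s * t = 1)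
    {m : ℕ} (hm : orderOf s = m) {x y x' y' : ℕ} :
    s ^ x * t ^ y = s ^ x' * t ^ y' ↔ (x - y : ZMod m) = x' - y' := by
  let u : Mˣ := ⟨s, t, h, by rw [mul_comm, h]⟩
  have hu : ∀ x y : ℕ, s ^ x * t ^ y = ↑(u ^ ((x : ℤ) - y)) := fun x y => by
    rw [_root_.zpow_sub, zpow_natCast, zpow_natCast, Units.val_mul, Units.val_pow_eq_pow_val,
      ← inv_pow, Units.val_pow_eq_pow_val]
    rfl
  rw [hu, hu, Units.val_inj, zpow_eq_zpow_iff_modEq, ← orderOf_units, hm,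
    ← ZMod.intCast_eq_intCast_iff]
  push_cast
  rfl

def reflectMod {m : ℕ} [NeZero m] (n : ℕ) (a : Fin m) : Fin m :=
  ⟨(n - a : ZMod m).val, ZMod.val_lt _⟩

theorem natCast_reflectMod {m : ℕ} [NeZero m] (n : ℕ) (a : Fin m) :
    ((reflectMod n a : ℕ) : ZMod m) = n - a :=
  ZMod.natCast_zmod_val _

theorem reflectMod_involutive {m : ℕ} [NeZero m] (n : ℕ) : Involutive (reflectMod (m := m) n) :=
  fun a => Fin.ext <| by
    rw [reflectMod, Fin.val_mk, natCast_reflectMod, sub_sub_cancel, ZMod.val_natCast,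
      Nat.mod_eq_of_lt a.isLt]

theorem bijective_natCast_finVal (P : ℕ) [NeZero P] :
    Bijective (fun r : Fin P => ((r : ℕ) : ZMod P)) := by
  refine (Fintype.bijective_iff_injective_and_card _).2 ⟨fun a b hab => Fin.ext ?_, by simp⟩
  simpa [ZMod.val_natCast, Nat.mod_eq_of_lt] using congrArg ZMod.val hab

theorem circPerm_mul_transpose (P : ℕ) [NeZero P] (b b' : ZMod P) :
    circPerm P b * (circPerm P b')ᵀ = circPerm P (b - b') := by
  ext p q
  simp only [mul_apply, transpose_apply, circPerm, of_apply]
  rw [Fintype.sum_bijective _ (bijective_natCast_finVal P) _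
    (fun x => (if x - (p : ℕ) = b then (1 : ZMod 2) else 0) * if x - (q : ℕ) = b' then 1 else 0)
    (fun _ => rfl)]
  simp only [sub_eq_iff_eq_add, ite_mul, one_mul, zero_mul, sum_ite_eq', mem_univ, if_true]
  exact if_congr (by constructor <;> intro h <;> linear_combination -h) rfl rfl

theorem qcMatrix'_mul_transpose_eq_zero {P J K L : ℕ} [NeZero P] {c : Fin J → Fin L → ZMod P}
    {d : Fin K → Fin L → ZMod P} (h : ∀ j k, MultEven (fun l => c j l - d k l)) :
    qcMatrix' c * (qcMatrix' d)ᵀ = 0 := by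
  ext ⟨j, p⟩ ⟨k, q⟩
  simp only [mul_apply, Fintype.sum_prod_type, qcMatrix', transpose_apply, of_apply]
  have hblock (l) : ∑ r, circPerm P (c j l) p r * circPerm P (d k l) q r =
      circPerm P (c j l - d k l) p q := by
    rw [← circPerm_mul_transpose]; rfl
  simp only [hblock, Matrix.zero_apply]
  simp only [circPerm, of_apply, sum_boole]
  simp_rw [eq_comm (a := ((q : ℕ) : ZMod P) - _)]
  exact (h j k _).natCast_zmod_two

theorem multEven_twisted_difference {P m : ℕ} [NeZero m] {s s' t : ZMod P} (hs : s * s' = 1)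
    (hm : orderOf s = m) (j k : ℕ) {v : Fin (2 * m) → ZMod P}
    (hv : ∀ l, v l =
      (if (l : ℕ) < m then s ^ (l : ℕ) * s' ^ j else t * (s ^ (l : ℕ) * s' ^ j)) -
        if (l : ℕ) < m then -(t * (s ^ k * s' ^ (l : ℕ))) else -(s ^ k * s' ^ (l : ℕ))) :
    MultEven v := by
  refine multEven_of_swap_halves (reflectMod (j + k)) (reflectMod_involutive _) fun a => ?_
  have hrefl := natCast_reflectMod (m := m) (j + k) a
  have hswap_c : s ^ (reflectMod (j + k) a + m : ℕ) * s' ^ j = s ^ k * s' ^ (a : ℕ) :=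
    (pow_mul_pow_eq_pow_mul_pow_iff hs hm).2 <| by
      push_cast [hrefl, ZMod.natCast_self]; ring
  have hswap_d : s ^ k * s' ^ (reflectMod (j + k) a + m : ℕ) = s ^ (a : ℕ) * s' ^ j :=
    (pow_mul_pow_eq_pow_mul_pow_iff hs hm).2 <| by
      push_cast [hrefl, ZMod.natCast_self]; ring
  simp only [hv, finProdFinEquiv_apply_val, Fin.val_one, Fin.val_zero, mul_one, mul_zero,
    add_zero, a.isLt, if_true, add_lt_iff_neg_right, Nat.not_lt_zero, if_false, hswap_c, hswap_d]
  ring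

theorem perfume_twisted_general (P σ τ : ℕ) (h : IsPerfume P σ τ) (J K : ℕ)
    (c : Fin J → Fin (2 * ordP P σ) → ZMod P)
    (d : Fin K → Fin (2 * ordP P σ) → ZMod P)
    (hc : ∀ j l, c j l =
      if (l : ℕ) < ordP P σ then
        (σ : ZMod P) ^ (l : ℕ) * ((σ : ZMod P)⁻¹) ^ (j : ℕ)
      else
        (τ : ZMod P) * ((σ : ZMod P) ^ (l : ℕ) * ((σ : ZMod P)⁻¹) ^ (j : ℕ)))
    (hd : ∀ k l, d k l =
      if (l : ℕ) < ordP P σ then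
        -((τ : ZMod P) * ((σ : ZMod P) ^ (k : ℕ) * ((σ : ZMod P)⁻¹) ^ (l : ℕ)))
      else
        -((σ : ZMod P) ^ (k : ℕ) * ((σ : ZMod P)⁻¹) ^ (l : ℕ))) :
    (∀ (j : Fin J) (k : Fin K), MultEven (fun l => c j l - d k l)) ∧
      qcMatrix' c * (qcMatrix' d)ᵀ = 0 := by
  obtain ⟨hP, -, -, ⟨hσ, -⟩, -, -⟩ := h
  have : NeZero P := ⟨hP.ne'⟩
  have : NeZero (ordP P σ) := ⟨by
    rw [ordP, ← ZMod.coe_unitOfCoprime σ hσ, orderOf_units]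
    exact (orderOf_pos _).ne'⟩
  have hdiff (j : Fin J) (k : Fin K) : MultEven (fun l => c j l - d k l) :=
    multEven_twisted_difference (m := ordP P σ) (ZMod.coe_mul_inv_eq_one σ hσ) rfl j k
      fun l => by rw [hc, hd]
  exact ⟨hdiff, qcMatrix'_mul_transpose_eq_zero hdiff⟩

/-- for a perfume `(P, σ, τ)` with `m = ord_P(σ)`, `L = 2m`, and
model matrices `c_{j,l} = σ^{l−j}` (resp. `τ·σ^{l−j}`) for `l < m` (resp.
`m ≤ l < L`) and `d_{k,l} = −τ·σ^{k−l}` (resp. `−σ^{k−l}`) for `l < m` (resp.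
`m ≤ l < L`), every cross difference vector `c_j − d_k` is multiplicity even;
consequently the associated QC-LDPC matrices satisfy `H_C · H_Dᵀ = 0`, i.e. the
twisted condition (T). -/
theorem perfume_twisted (P σ τ : ℕ) (h : IsPerfume P σ τ) (J K : ℕ)
    (hJ : 1 ≤ J) (hJm : J ≤ ordP P σ) (hK : 1 ≤ K) (hKm : K ≤ ordP P σ)
    (c : Fin J → Fin (2 * ordP P σ) → ZMod P)
    (d : Fin K → Fin (2 * ordP P σ) → ZMod P)
    (hc : ∀ j l, c j l =
      if (l : ℕ) < ordP P σ then
        (σ : ZMod P) ^ (l : ℕ) * ((σ : ZMod P)⁻¹) ^ (j : ℕ)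
      else
        (τ : ZMod P) * ((σ : ZMod P) ^ (l : ℕ) * ((σ : ZMod P)⁻¹) ^ (j : ℕ)))
    (hd : ∀ k l, d k l =
      if (l : ℕ) < ordP P σ then
        -((τ : ZMod P) * ((σ : ZMod P) ^ (k : ℕ) * ((σ : ZMod P)⁻¹) ^ (l : ℕ)))
      else
        -((σ : ZMod P) ^ (k : ℕ) * ((σ : ZMod P)⁻¹) ^ (l : ℕ))) :
    (∀ (j : Fin J) (k : Fin K), MultEven (fun l => c j l - d k l)) ∧
      qcMatrix' c * (qcMatrix' d)ᵀ = 0 :=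
  perfume_twisted_general P σ τ h J K c d hc hd
end

section
/- Let (P, σ, τ) be a perfume, let m := ord_P(σ) and L := 2m, and let 1 ≤ J, K ≤ m. Define c_{j,l} := σ^{l−j} for 0 ≤ l < m and c_{j,l} := τ·σ^{l−j} for m ≤ l < L (0 ≤ j < J), and d_{k,l} := −τ·σ^{k−l} for 0 ≤ l < m and d_{k,l} := −σ^{k−l} for m ≤ l < L (0 ≤ k < K), all in ZMod P with negative exponents meaning powers of σ^{−1}. Then for all 0 ≤ a < b < J, the difference vector c_a − c_b = (c_{a,0} − c_{b,0}, …, c_{a,L−1} − c_{b,L−1}) in (ZMod P)^L is multiplicity free, and likewise for all 0 ≤ a < b < K the vector d_a − d_b is multiplicity free. -/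
/-- A vector is multiplicity free if all its entries are pairwise distinct. -/
def MultFree {P L : ℕ} (v : Fin L → ZMod P) : Prop :=
  Function.Injective v

/-!
Write `g` for the unit `σ` of `ZMod P` and `t` for `τ`, so `g` has order `m` and `t` is not a
power of `g`. The difference of rows `a < b` of `c` is `((if l < m then 1 else t) * g^l)_l` times
`g⁻ᵃ - g⁻ᵇ`, and that of `d` is `((if l < m then t else 1) * g⁻ˡ)_l` times `gᵇ - gᵃ`; both
factors are units because `g^(b-a) - 1` is (the fulfillment condition). The vector
`(t₀ gˡ)_{l<m}, (t₁ gˡ)_{m≤l<2m}` has distinct entries as soon as `t₀⁻¹ t₁ ∉ ⟨g⟩`.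
-/

open Function Subgroup

section Group

variable {G : Type*} [Group G]

theorem exists_pos_pow_eq_of_mem_zpowers {g x : G} (hg : IsOfFinOrder g) (hx : x ∈ zpowers g) :
    ∃ i, 0 < i ∧ i ≤ orderOf g ∧ g ^ i = x := by
  obtain ⟨n, rfl⟩ := (Submonoid.mem_powers_iff _ _).mp (hg.mem_powers_iff_mem_zpowers.mpr hx)
  rcases Nat.eq_zero_or_pos (n % orderOf g) with h0 | h0
  · refine ⟨orderOf g, hg.orderOf_pos, le_rfl, ?_⟩
    rw [pow_orderOf_eq_one, ← pow_mod_orderOf, h0, pow_zero]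
  · exact ⟨n % orderOf g, h0, (Nat.mod_lt _ hg.orderOf_pos).le, pow_mod_orderOf g n⟩

theorem injective_ite_mul_pow {g t₀ t₁ : G} {m : ℕ} (hm : orderOf g = m)
    (ht : t₀⁻¹ * t₁ ∉ zpowers g) :
    Injective fun l : Fin (2 * m) => (if (l : ℕ) < m then t₀ else t₁) * g ^ (l : ℕ) := by
  subst hm
  have hdisj : ∀ n n' : ℕ, t₀ * g ^ n ≠ t₁ * g ^ n' := fun n n' h => ht <| by
    rw [show t₀⁻¹ * t₁ = g ^ n * (g ^ n')⁻¹ by rw [eq_mul_inv_iff_mul_eq, mul_assoc, ← h,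
      inv_mul_cancel_left]]
    exact mul_mem (pow_mem (mem_zpowers g) n) (inv_mem (pow_mem (mem_zpowers g) n'))
  have hshift : ∀ n, orderOf g ≤ n → g ^ n = g ^ (n - orderOf g) := fun n hn => by
    rw [← pow_mod_orderOf, Nat.mod_eq_sub_mod hn, pow_mod_orderOf]
  intro l l' h
  have hl := l.2
  have hl' := l'.2
  apply Fin.ext
  dsimp only at h
  split_ifs at h with h₁ h₂ h₂
  · exact pow_injOn_Iio_orderOf h₁ h₂ (mul_left_cancel h)
  · exact absurd h (hdisj _ _)
  · exact absurd h.symm (hdisj _ _)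
  · rw [hshift _ (not_lt.mp h₁), hshift _ (not_lt.mp h₂)] at h
    have := pow_injOn_Iio_orderOf (x := g) (by simp only [Set.mem_Iio]; omega)
      (by simp only [Set.mem_Iio]; omega) (mul_left_cancel h)
    omega

end Group

section CommRing

variable {R : Type*} [CommRing R] {g t : Rˣ} {m : ℕ}

theorem isUnit_pow_sub_pow (hful : ∀ i, 0 < i → i < m → IsUnit ((g : R) ^ i - 1)) {a b : ℕ}
    (hab : a < b) (hb : b < m) : IsUnit ((g : R) ^ b - (g : R) ^ a) := by
  rw [show (g : R) ^ b - (g : R) ^ a = (g : R) ^ a * ((g : R) ^ (b - a) - 1) by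
    rw [mul_sub, ← pow_add, Nat.add_sub_cancel' hab.le, mul_one]]
  exact (g.isUnit.pow a).mul (hful _ (by omega) (by omega))

theorem Units.isUnit_inv_sub_inv {x y : Rˣ} (h : IsUnit ((y : R) - x)) :
    IsUnit (((x⁻¹ : Rˣ) : R) - (y⁻¹ : Rˣ)) := by
  rw [show ((x⁻¹ : Rˣ) : R) - (y⁻¹ : Rˣ) = ((x⁻¹ * y⁻¹ : Rˣ) : R) * (y - x) by
    rw [Units.val_mul]
    linear_combination ((y⁻¹ : Rˣ) : R) * x.inv_mul - ((x⁻¹ : Rˣ) : R) * y.inv_mul]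
  exact (Units.isUnit _).mul h

theorem injective_ite_mul_pow_mul {t₀ t₁ : Rˣ} (hm : orderOf g = m)
    (ht : t₀⁻¹ * t₁ ∉ zpowers g) {δ : R} (hδ : IsUnit δ) :
    Injective fun l : Fin (2 * m) =>
      (((if (l : ℕ) < m then t₀ else t₁) * g ^ (l : ℕ) : Rˣ) : R) * δ :=
  hδ.mul_left_injective.comp (Units.val_injective.comp (injective_ite_mul_pow hm ht))

variable (hm : orderOf g = m) (ht : t ∉ zpowers g)
  (hful : ∀ i, 0 < i → i < m → IsUnit ((g : R) ^ i - 1))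
include hm ht hful

theorem injective_sub_rows_c {J : ℕ} (hJ : J ≤ m) (c : Fin J → Fin (2 * m) → R)
    (hc : ∀ j l, c j l = if (l : ℕ) < m then (g : R) ^ (l : ℕ) * ((g⁻¹ : Rˣ) : R) ^ (j : ℕ)
      else (t : R) * ((g : R) ^ (l : ℕ) * ((g⁻¹ : Rˣ) : R) ^ (j : ℕ)))
    (a b : Fin J) (hab : a < b) : Injective fun l => c a l - c b l := by
  have hδ : IsUnit (((g⁻¹ : Rˣ) : R) ^ (a : ℕ) - ((g⁻¹ : Rˣ) : R) ^ (b : ℕ)) := by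
    simpa only [← Units.val_pow_eq_pow_val, inv_pow] using
      Units.isUnit_inv_sub_inv (by simpa using isUnit_pow_sub_pow hful hab (by omega))
  have hrow : (fun l => c a l - c b l) = fun l : Fin (2 * m) =>
      (((if (l : ℕ) < m then 1 else t) * g ^ (l : ℕ) : Rˣ) : R) *
        (((g⁻¹ : Rˣ) : R) ^ (a : ℕ) - ((g⁻¹ : Rˣ) : R) ^ (b : ℕ)) := by
    funext l
    simp only [hc]
    split_ifs <;> push_cast <;> ring
  rw [hrow]
  exact injective_ite_mul_pow_mul hm (by rwa [inv_one, one_mul]) hδ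

theorem injective_sub_rows_d {K : ℕ} (hK : K ≤ m) (d : Fin K → Fin (2 * m) → R)
    (hd : ∀ k l, d k l = if (l : ℕ) < m then -((t : R) * ((g : R) ^ (k : ℕ) *
        ((g⁻¹ : Rˣ) : R) ^ (l : ℕ)))
      else -((g : R) ^ (k : ℕ) * ((g⁻¹ : Rˣ) : R) ^ (l : ℕ)))
    (a b : Fin K) (hab : a < b) : Injective fun l => d a l - d b l := by
  have hrow : (fun l => d a l - d b l) = fun l : Fin (2 * m) =>
      (((if (l : ℕ) < m then t else 1) * g⁻¹ ^ (l : ℕ) : Rˣ) : R) *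
        ((g : R) ^ (b : ℕ) - (g : R) ^ (a : ℕ)) := by
    funext l
    simp only [hd]
    split_ifs <;> push_cast <;> ring
  rw [hrow]
  exact injective_ite_mul_pow_mul ((orderOf_inv g).trans hm)
    (by rwa [mul_one, zpowers_inv, inv_mem_iff]) (isUnit_pow_sub_pow hful hab (by omega))

end CommRing

theorem IsFulfillment.isUnit_pow_sub_one {P σ : ℕ} (h : IsFulfillment P σ) (hσ : 0 < σ) {i : ℕ}
    (hi : 0 < i) (him : i < ordP P σ) : IsUnit ((σ : ZMod P) ^ i - 1) := by
  have := (ZMod.isUnit_iff_coprime _ P).mpr (h.2 i hi him)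
  rwa [Nat.cast_sub (Nat.one_le_pow _ _ hσ), Nat.cast_pow, Nat.cast_one] at this

theorem orderOf_unitOfCoprime {P σ : ℕ} (hσ : σ.Coprime P) :
    orderOf (ZMod.unitOfCoprime σ hσ) = ordP P σ := by
  rw [ordP, ← ZMod.coe_unitOfCoprime σ hσ, orderOf_units]

theorem unitOfCoprime_notMem_zpowers {P σ τ : ℕ} [NeZero P] (hσ : σ.Coprime P)
    (hτ : τ.Coprime P) (h : ∀ i, 1 ≤ i → i ≤ ordP P σ → (τ : ZMod P) ≠ (σ : ZMod P) ^ i) :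
    ZMod.unitOfCoprime τ hτ ∉ zpowers (ZMod.unitOfCoprime σ hσ) := fun hmem => by
  obtain ⟨i, hi, him, hpow⟩ := exists_pos_pow_eq_of_mem_zpowers (isOfFinOrder_of_finite _) hmem
  rw [orderOf_unitOfCoprime] at him
  apply h i hi him
  rw [← ZMod.coe_unitOfCoprime τ hτ, ← hpow, Units.val_pow_eq_pow_val, ZMod.coe_unitOfCoprime]

theorem perfume_rows_multiplicity_free_general (P σ τ : ℕ) (h : IsPerfume P σ τ)
    (J K : ℕ) (hJm : J ≤ ordP P σ) (hKm : K ≤ ordP P σ)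
    (c : Fin J → Fin (2 * ordP P σ) → ZMod P)
    (d : Fin K → Fin (2 * ordP P σ) → ZMod P)
    (hc : ∀ j l, c j l =
      if (l : ℕ) < ordP P σ then
        (σ : ZMod P) ^ (l : ℕ) * ((σ : ZMod P)⁻¹) ^ (j : ℕ)
      else
        (τ : ZMod P) * ((σ : ZMod P) ^ (l : ℕ) * ((σ : ZMod P)⁻¹) ^ (j : ℕ)))
    (hd : ∀ k l, d k l =
      if (l : ℕ) < ordP P σ then
        -((τ : ZMod P) * ((σ : ZMod P) ^ (k : ℕ) * ((σ : ZMod P)⁻¹) ^ (l : ℕ)))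
      else
        -((σ : ZMod P) ^ (k : ℕ) * ((σ : ZMod P)⁻¹) ^ (l : ℕ))) :
    (∀ a b : Fin J, a < b → MultFree (fun l => c a l - c b l)) ∧
    (∀ a b : Fin K, a < b → MultFree (fun l => d a l - d b l)) := by
  obtain ⟨hP, hσ, -, hful, hτP, hτσ⟩ := h
  have : NeZero P := ⟨hP.ne'⟩
  have hg := ZMod.coe_unitOfCoprime σ hful.1
  have ht := ZMod.coe_unitOfCoprime τ hτP
  have hfulg : ∀ i, 0 < i → i < ordP P σ →
      IsUnit ((ZMod.unitOfCoprime σ hful.1 : ZMod P) ^ i - 1) := fun i hi him => by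
    rw [hg]; exact hful.isUnit_pow_sub_one hσ hi him
  simp only [← hg, ← ht, ZMod.inv_coe_unit] at hc hd
  have hm := orderOf_unitOfCoprime hful.1
  have hnot := unitOfCoprime_notMem_zpowers hful.1 hτP hτσ
  exact ⟨injective_sub_rows_c hm hnot hfulg hJm c hc, injective_sub_rows_d hm hnot hfulg hKm d hd⟩

/-- for a perfume `(P, σ, τ)` with `m = ord_P(σ)`, `L = 2m`, and
the model matrices defined by `c_{j,l} = σ^{l−j}` (resp. `τ·σ^{l−j}`) for
`l < m` (resp. `m ≤ l < L`) and `d_{k,l} = −τ·σ^{k−l}` (resp. `−σ^{k−l}`) for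
`l < m` (resp. `m ≤ l < L`), every difference vector of two distinct rows
within each model matrix is multiplicity free. -/
theorem perfume_rows_multiplicity_free (P σ τ : ℕ) (h : IsPerfume P σ τ)
    (J K : ℕ) (hJ : 1 ≤ J) (hJm : J ≤ ordP P σ) (hK : 1 ≤ K) (hKm : K ≤ ordP P σ)
    (c : Fin J → Fin (2 * ordP P σ) → ZMod P)
    (d : Fin K → Fin (2 * ordP P σ) → ZMod P)
    (hc : ∀ j l, c j l =
      if (l : ℕ) < ordP P σ then
        (σ : ZMod P) ^ (l : ℕ) * ((σ : ZMod P)⁻¹) ^ (j : ℕ)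
      else
        (τ : ZMod P) * ((σ : ZMod P) ^ (l : ℕ) * ((σ : ZMod P)⁻¹) ^ (j : ℕ)))
    (hd : ∀ k l, d k l =
      if (l : ℕ) < ordP P σ then
        -((τ : ZMod P) * ((σ : ZMod P) ^ (k : ℕ) * ((σ : ZMod P)⁻¹) ^ (l : ℕ)))
      else
        -((σ : ZMod P) ^ (k : ℕ) * ((σ : ZMod P)⁻¹) ^ (l : ℕ))) :
    (∀ a b : Fin J, a < b → MultFree (fun l => c a l - c b l)) ∧
    (∀ a b : Fin K, a < b → MultFree (fun l => d a l - d b l)) :=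
  perfume_rows_multiplicity_free_general P σ τ h J K hJm hKm c d hc hd
end

section
/- Let (P, σ, τ) be a perfume, let m := ord_P(σ) and L := 2m, let 2 ≤ J ≤ m, and define the J×L model matrix 𝓗_C = (c_{j,l}) over ZMod P by c_{j,l} := σ^{l−j} for 0 ≤ l < m and c_{j,l} := τ·σ^{l−j} for m ≤ l < L. Then the Tanner graph of the associated JP × LP binary QC-LDPC matrix H_C has girth at least 6. -/
/-!
The Tanner graph is bipartite, so its cycles have even length, and a `4`-cycle amounts to
block rows `j ≠ j'` and block columns `l ≠ l'` with `c j l - c j l' + c j' l' - c j' l = 0`.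
The model matrix of a perfume factors as `c j l = b l * σ⁻ʲ` with `b l = σ ^ l` or `τ * σ ^ l`,
so this alternating sum is `(b l - b l') * (σ⁻ʲ - σ⁻ʲ')`. The second factor is a unit because `σ`
is a fulfillment, and `b` is injective because `τ` lies outside the cyclic group generated by `σ`.

Since `SimpleGraph.girth` is `0` for an acyclic graph, a cycle must also be exhibited: every vertex
of the Tanner graph has degree at least `2`, and in a finite graph a longest path could otherwise be
extended.
-/
open Matrix

/-- The Tanner graph of a binary matrix `H`. -/
def tannerGraph {R C : Type*} (H : Matrix R C (ZMod 2)) : SimpleGraph (R ⊕ C) :=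
  SimpleGraph.fromRel fun x y =>
    match x, y with
    | Sum.inl r, Sum.inr s => H r s = 1
    | _, _ => False

namespace SimpleGraph

variable {V : Type*} {G : SimpleGraph V}

theorem IsAcyclic.exists_isPath_length_eq [Nonempty V] (hG : G.IsAcyclic)
    (hadj : ∀ v u, ∃ w, G.Adj v w ∧ w ≠ u) (n : ℕ) :
    ∃ (u v : V) (p : G.Walk u v), p.IsPath ∧ p.length = n := by
  induction n with
  | zero =>
    obtain ⟨v⟩ := ‹Nonempty V›
    exact ⟨v, v, .nil, .nil, rfl⟩
  | succ n ih =>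
    obtain ⟨u, v, p, hp, hlen⟩ := ih
    obtain ⟨w, hvw, hw⟩ := hadj v p.penultimate
    have hwp : w ∉ p.support := fun hmem => hw (hG.eq_penultimate_of_adj_end hp hvw hmem)
    exact ⟨u, w, p.concat hvw, hp.concat hwp hvw, by simp [hlen]⟩

theorem not_isAcyclic_of_forall_exists_adj_ne [Finite V] [Nonempty V]
    (hadj : ∀ v u, ∃ w, G.Adj v w ∧ w ≠ u) : ¬ G.IsAcyclic := by
  intro hG
  have := Fintype.ofFinite V
  obtain ⟨u, v, p, hp, hlen⟩ := hG.exists_isPath_length_eq hadj (Fintype.card V)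
  exact hp.length_lt.ne hlen

end SimpleGraph

open SimpleGraph

section Tanner

variable {R C : Type*} (H : Matrix R C (ZMod 2))

@[simp]
lemma tannerGraph_adj_inl_inr {r : R} {s : C} :
    (tannerGraph H).Adj (.inl r) (.inr s) ↔ H r s = 1 := by
  simp [tannerGraph]

@[simp]
lemma tannerGraph_adj_inr_inl {r : R} {s : C} :
    (tannerGraph H).Adj (.inr s) (.inl r) ↔ H r s = 1 := by
  simp [tannerGraph]

@[simp]
lemma not_tannerGraph_adj_inl_inl {r r' : R} : ¬ (tannerGraph H).Adj (.inl r) (.inl r') := by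
  simp [tannerGraph]

@[simp]
lemma not_tannerGraph_adj_inr_inr {s s' : C} : ¬ (tannerGraph H).Adj (.inr s) (.inr s') := by
  simp [tannerGraph]

lemma tannerGraph_colorable_two : (tannerGraph H).Colorable 2 :=
  (Coloring.mk (G := tannerGraph H) Sum.isLeft
    (by rintro (r | s) (r' | s') h <;> simp_all)).colorable

def IsRectangleFree : Prop :=
  ∀ ⦃r r' s s'⦄, r ≠ r' → s ≠ s' → H r s = 1 → H r s' = 1 → H r' s = 1 → H r' s' ≠ 1

variable {H}

lemma IsRectangleFree.not_four_cycle (hH : IsRectangleFree H) {a b c d : R ⊕ C}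
    (hab : (tannerGraph H).Adj a b) (hbc : (tannerGraph H).Adj b c)
    (hcd : (tannerGraph H).Adj c d) (hda : (tannerGraph H).Adj d a) (hac : a ≠ c) (hbd : b ≠ d) :
    False := by
  rcases a with r | s <;> rcases b with r₁ | s₁ <;> rcases c with r' | s' <;>
    rcases d with r₂ | s₂ <;>
    simp only [tannerGraph_adj_inl_inr, tannerGraph_adj_inr_inl, not_tannerGraph_adj_inl_inl,
      not_tannerGraph_adj_inr_inr, ne_eq, Sum.inl.injEq, Sum.inr.injEq, reduceCtorEq,
      not_false_eq_true] at *
  · exact hH (Ne.symm hac) hbd hbc hcd hab hda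
  · exact hH hbd hac hab hbc hda hcd

theorem IsRectangleFree.six_le_egirth (hH : IsRectangleFree H) :
    6 ≤ (tannerGraph H).egirth := by
  rw [le_egirth]
  intro a w hw
  have h3 := hw.three_le_length
  obtain ⟨k, hk⟩ := two_colorable_iff_forall_loop_even.1 (tannerGraph_colorable_two H) a w
  suffices w.length ≠ 4 by norm_cast; omega
  intro h4
  have hinj := hw.getVert_injOn
  have h30 : (tannerGraph H).Adj (w.getVert 3) a := by
    have := w.adj_getVert_succ (i := 3) (by omega)
    rwa [show 3 + 1 = w.length by omega, w.getVert_length] at this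
  have h01 : (tannerGraph H).Adj a (w.getVert 1) := by
    simpa using w.adj_getVert_succ (i := 0) (by omega)
  refine hH.not_four_cycle h01 (w.adj_getVert_succ (i := 1) (by omega))
    (w.adj_getVert_succ (i := 2) (by omega)) h30 ?_ ?_
  · intro h
    have := hinj (x₁ := w.length) (x₂ := 2) (by simp only [Set.mem_ofPred_eq]; omega)
      (by simp only [Set.mem_ofPred_eq]; omega) (by rw [w.getVert_length]; exact h)
    omega
  · intro h
    have := hinj (x₁ := 1) (x₂ := 3) (by simp only [Set.mem_ofPred_eq]; omega)
      (by simp only [Set.mem_ofPred_eq]; omega) h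
    omega

lemma tannerGraph_exists_adj_ne (hrow : ∀ r, ∃ s s', s ≠ s' ∧ H r s = 1 ∧ H r s' = 1)
    (hcol : ∀ s, ∃ r r', r ≠ r' ∧ H r s = 1 ∧ H r' s = 1) (v u : R ⊕ C) :
    ∃ w, (tannerGraph H).Adj v w ∧ w ≠ u := by
  rcases v with r | s
  · obtain ⟨s, s', hss', h, h'⟩ := hrow r
    by_cases hu : Sum.inr s = u
    · exact ⟨.inr s', by simpa, fun h => hss' (Sum.inr_injective (hu.trans h.symm))⟩
    · exact ⟨.inr s, by simpa, hu⟩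
  · obtain ⟨r, r', hrr', h, h'⟩ := hcol s
    by_cases hu : Sum.inl r = u
    · exact ⟨.inl r', by simpa, fun h => hrr' (Sum.inl_injective (hu.trans h.symm))⟩
    · exact ⟨.inl r, by simpa, hu⟩

end Tanner

section QCMatrix

variable {P J L : ℕ} {c : Fin J → Fin L → ZMod P}

lemma qcMatrix'_eq_one_iff {r : Fin J × Fin P} {s : Fin L × Fin P} :
    qcMatrix' c r s = 1 ↔ ((s.2 : ℕ) : ZMod P) - ((r.2 : ℕ) : ZMod P) = c r.1 s.1 := by
  simp only [qcMatrix', circPerm, Matrix.of_apply]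
  split_ifs with h <;> simp [h]

lemma Fin.natCast_zmod_injective : Function.Injective fun p : Fin P => ((p : ℕ) : ZMod P) := by
  intro p q h
  simpa [ZMod.natCast_eq_natCast_iff', Nat.mod_eq_of_lt p.isLt, Nat.mod_eq_of_lt q.isLt,
    Fin.ext_iff] using h

lemma Fin.exists_natCast_zmod_eq [NeZero P] (z : ZMod P) :
    ∃ p : Fin P, ((p : ℕ) : ZMod P) = z :=
  ⟨⟨z.val, z.val_lt⟩, ZMod.natCast_zmod_val z⟩

lemma qcMatrix'_isRectangleFree
    (hc : ∀ j j' l l', j ≠ j' → l ≠ l' → c j l + c j' l' ≠ c j l' + c j' l) :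
    IsRectangleFree (qcMatrix' c) := by
  rintro ⟨j, p⟩ ⟨j', p'⟩ ⟨l, q⟩ ⟨l', q'⟩ hr hs e₁ e₂ e₃ e₄
  simp only [qcMatrix'_eq_one_iff] at e₁ e₂ e₃ e₄
  by_cases hj : j = j'
  · subst hj
    exact hr (Prod.ext rfl (Fin.natCast_zmod_injective (by linear_combination e₃ - e₁)))
  by_cases hl : l = l'
  · subst hl
    exact hs (Prod.ext rfl (Fin.natCast_zmod_injective (by linear_combination e₁ - e₂)))
  exact hc j j' l l' hj hl (by linear_combination e₂ + e₃ - e₁ - e₄)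

lemma qcMatrix'_not_isAcyclic [NeZero P] (hJ : 2 ≤ J) (hL : 2 ≤ L) :
    ¬ (tannerGraph (qcMatrix' c)).IsAcyclic := by
  have : Nontrivial (Fin J) := Fin.nontrivial_iff_two_le.2 hJ
  have : Nontrivial (Fin L) := Fin.nontrivial_iff_two_le.2 hL
  refine not_isAcyclic_of_forall_exists_adj_ne (tannerGraph_exists_adj_ne ?_ ?_)
  · rintro ⟨j, p⟩
    obtain ⟨l, l', hll'⟩ := exists_pair_ne (Fin L)
    obtain ⟨q, hq⟩ := Fin.exists_natCast_zmod_eq (((p : ℕ) : ZMod P) + c j l)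
    obtain ⟨q', hq'⟩ := Fin.exists_natCast_zmod_eq (((p : ℕ) : ZMod P) + c j l')
    exact ⟨(l, q), (l', q'), by simp [hll'], qcMatrix'_eq_one_iff.2 (by simp [hq]),
      qcMatrix'_eq_one_iff.2 (by simp [hq'])⟩
  · rintro ⟨l, q⟩
    obtain ⟨j, j', hjj'⟩ := exists_pair_ne (Fin J)
    obtain ⟨p, hp⟩ := Fin.exists_natCast_zmod_eq (((q : ℕ) : ZMod P) - c j l)
    obtain ⟨p', hp'⟩ := Fin.exists_natCast_zmod_eq (((q : ℕ) : ZMod P) - c j' l)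
    exact ⟨(j, p), (j', p'), by simp [hjj'], qcMatrix'_eq_one_iff.2 (by simp [hp]),
      qcMatrix'_eq_one_iff.2 (by simp [hp'])⟩

end QCMatrix

section Algebra

variable {R : Type*} [CommRing R] {x y t : R}

lemma mul_add_mul_ne_mul_add_mul {a a' b b' : R} (ha : IsUnit (a - a')) (hb : b ≠ b') :
    b * a + b' * a' ≠ b' * a + b * a' := by
  intro h
  have : (b - b') * (a - a') = 0 := by linear_combination h
  exact hb (sub_eq_zero.1 (ha.mul_left_eq_zero.1 this))

lemma eq_pow_orderOf_sub_one (hxy : x * y = 1) (hx : 0 < orderOf x) :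
    y = x ^ (orderOf x - 1) := by
  calc y = x ^ orderOf x * y := by rw [pow_orderOf_eq_one, one_mul]
    _ = x ^ (orderOf x - 1) * (x * y) := by
      rw [← mul_assoc, ← pow_succ, Nat.sub_add_cancel hx]
    _ = x ^ (orderOf x - 1) := by rw [hxy, mul_one]

lemma isUnit_pow_sub_pow_s12 (hxy : x * y = 1)
    (hx : ∀ d, 0 < d → d < orderOf x → IsUnit (x ^ d - 1)) {i j : ℕ} (hij : i ≠ j)
    (hi : i < orderOf x) (hj : j < orderOf x) : IsUnit (y ^ i - y ^ j) := by
  wlog hlt : i < j generalizing i j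
  · rw [← neg_sub]
    exact (this hij.symm hj hi (by omega)).neg
  obtain ⟨d, rfl⟩ := Nat.exists_eq_add_of_lt hlt
  have hy : IsUnit y := IsUnit.of_mul_eq_one_right x hxy
  have hxyd : (x * y) ^ (d + 1) = 1 := by rw [hxy, one_pow]
  have : y ^ i - y ^ (i + d + 1) = y ^ (i + d + 1) * (x ^ (d + 1) - 1) := by
    linear_combination (-y ^ i) * hxyd
  rw [this]
  exact (hy.pow _).mul (hx (d + 1) (by omega) (by omega))

lemma ne_pow_of_forall_ne_pow (hx : 0 < orderOf x)
    (ht : ∀ i, 1 ≤ i → i ≤ orderOf x → t ≠ x ^ i) (n : ℕ) : t ≠ x ^ n := by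
  rw [← pow_mod_orderOf]
  by_cases hn : n % orderOf x = 0
  · rw [hn, pow_zero, ← pow_orderOf_eq_one x]
    exact ht _ hx le_rfl
  · exact ht _ (by omega) (Nat.mod_lt _ hx).le

lemma ite_pow_ne_ite_pow (hxy : x * y = 1) (ht : IsUnit t) (htx : ∀ n, t ≠ x ^ n) {l l' : ℕ}
    (hl : l < 2 * orderOf x) (hl' : l' < 2 * orderOf x) (hll' : l ≠ l') :
    (if l < orderOf x then x ^ l else t * x ^ l) ≠
      (if l' < orderOf x then x ^ l' else t * x ^ l') := by
  wlog hle : l < l' generalizing l l'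
  · exact (this hl' hl hll'.symm (by omega)).symm
  set m := orderOf x
  have hm : 0 < m := by omega
  have hpow : ∀ k, x ^ (m + k) = x ^ k := fun k => by rw [pow_add, pow_orderOf_eq_one, one_mul]
  split_ifs with hlm hlm' hlm'
  · exact fun h => hll' (pow_injOn_Iio_orderOf hlm hlm' h)
  · intro h
    -- then `t = x ^ l * y ^ l'` would be a power of `x`
    have hxyl : x ^ l' * y ^ l' = 1 := by rw [← mul_pow, hxy, one_pow]
    refine htx (l + (m - 1) * l') ?_
    rw [pow_add, pow_mul, ← eq_pow_orderOf_sub_one hxy hm, h]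
    linear_combination (-t) * hxyl
  · omega
  · intro h
    obtain ⟨k, rfl⟩ := Nat.exists_eq_add_of_le (not_lt.1 hlm)
    obtain ⟨k', rfl⟩ := Nat.exists_eq_add_of_le (not_lt.1 hlm')
    rw [hpow, hpow] at h
    have hkk' : k = k' := pow_injOn_Iio_orderOf (Set.mem_Iio.2 (by omega))
      (Set.mem_Iio.2 (by omega)) (ht.mul_left_cancel h)
    omega

end Algebra

section Perfume

variable {P σ τ : ℕ}

lemma IsPerfume.isUnit_pow_sub_one (h : IsPerfume P σ τ) (d : ℕ) (hd : 0 < d)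
    (hdm : d < ordP P σ) : IsUnit ((σ : ZMod P) ^ d - 1) := by
  obtain ⟨-, hσ, -, ⟨-, hful⟩, -⟩ := h
  have := (ZMod.isUnit_iff_coprime _ P).2 (hful d hd hdm)
  rwa [Nat.cast_sub (Nat.one_le_pow _ _ hσ), Nat.cast_pow, Nat.cast_one] at this

lemma IsPerfume.model_add_ne_add (h : IsPerfume P σ τ) {J : ℕ} (hJm : J ≤ ordP P σ)
    {c : Fin J → Fin (2 * ordP P σ) → ZMod P}
    (hc : ∀ j l, c j l =
      if (l : ℕ) < ordP P σ then
        (σ : ZMod P) ^ (l : ℕ) * ((σ : ZMod P)⁻¹) ^ (j : ℕ)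
      else
        (τ : ZMod P) * ((σ : ZMod P) ^ (l : ℕ) * ((σ : ZMod P)⁻¹) ^ (j : ℕ)))
    (j j' : Fin J) (l l' : Fin (2 * ordP P σ)) (hjj' : j ≠ j') (hll' : l ≠ l') :
    c j l + c j' l' ≠ c j l' + c j' l := by
  have hsub := h.isUnit_pow_sub_one
  obtain ⟨-, -, -, ⟨hσP, -⟩, hτP, hτ⟩ := h
  set x : ZMod P := (σ : ZMod P)
  have hxy : x * x⁻¹ = 1 := ZMod.mul_inv_of_unit _ ((ZMod.isUnit_iff_coprime σ P).2 hσP)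
  have hm : 0 < orderOf x := lt_of_lt_of_le (Fin.pos j) hJm
  have hform : ∀ j l, c j l =
      (if (l : ℕ) < ordP P σ then x ^ (l : ℕ) else τ * x ^ (l : ℕ)) * x⁻¹ ^ (j : ℕ) := by
    intro j l
    rw [hc]
    split_ifs <;> ring
  rw [hform, hform, hform, hform]
  exact mul_add_mul_ne_mul_add_mul
    (isUnit_pow_sub_pow_s12 hxy hsub (Fin.val_ne_of_ne hjj') (j.isLt.trans_le hJm)
      (j'.isLt.trans_le hJm))
    (ite_pow_ne_ite_pow hxy ((ZMod.isUnit_iff_coprime τ P).2 hτP)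
      (ne_pow_of_forall_ne_pow hm hτ) l.isLt l'.isLt (Fin.val_ne_of_ne hll'))

end Perfume

/-- for a perfume `(P, σ, τ)` with `m = ord_P(σ)`, `L = 2m`,
`2 ≤ J ≤ m`, and the model matrix `c_{j,l} = σ^{l−j}` (resp. `τ·σ^{l−j}`) for
`l < m` (resp. `m ≤ l < L`), the Tanner graph of the associated `JP × LP`
QC-LDPC matrix has girth at least 6. -/
theorem perfume_girth_ge_six (P σ τ : ℕ) (h : IsPerfume P σ τ) (J : ℕ)
    (hJ : 2 ≤ J) (hJm : J ≤ ordP P σ)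
    (c : Fin J → Fin (2 * ordP P σ) → ZMod P)
    (hc : ∀ j l, c j l =
      if (l : ℕ) < ordP P σ then
        (σ : ZMod P) ^ (l : ℕ) * ((σ : ZMod P)⁻¹) ^ (j : ℕ)
      else
        (τ : ZMod P) * ((σ : ZMod P) ^ (l : ℕ) * ((σ : ZMod P)⁻¹) ^ (j : ℕ))) :
    6 ≤ (tannerGraph (qcMatrix' c)).girth := by
  have : NeZero P := ⟨h.1.ne'⟩
  have hacyc := qcMatrix'_not_isAcyclic (c := c) hJ (by omega)
  have h6 := (qcMatrix'_isRectangleFree (h.model_add_ne_add hJm hc)).six_le_egirth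
  exact ENat.toNat_le_toNat h6 (egirth_eq_top.not.mpr hacyc)
end

section
/- For every positive integer m there exist positive integers P, σ, τ such that (P, σ, τ) is a perfume and ord_P(σ) = m. -/
/-- for every positive integer `m` there exists a perfume
`(P, σ, τ)` with `ord_P(σ) = m`. -/
theorem exists_perfume_of_order (m : ℕ) (hm : 1 ≤ m) :
    ∃ P σ τ : ℕ, IsPerfume P σ τ ∧ ordP P σ = m := by
  have hm0 : m ≠ 0 := by omega
  obtain ⟨p, hp, hpm, hmod⟩ := Nat.exists_prime_gt_modEq_one (k := m) (m + 1) hm0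
  haveI : Fact p.Prime := ⟨hp⟩
  have hppos : 0 < p := hp.pos
  have hdvd : m ∣ p - 1 := (Nat.modEq_iff_dvd' hp.pos).mp hmod.symm
  have hcard : Nat.card (ZMod p)ˣ = p - 1 := by
    rw [Nat.card_eq_fintype_card, ZMod.card_units_eq_totient, Nat.totient_prime hp]
  have hmlt : m < p - 1 := by omega
  -- element of order m in the cyclic unit group
  obtain ⟨g, hg⟩ := IsCyclic.exists_ofOrder_eq_natCard (α := (ZMod p)ˣ)
  set u : (ZMod p)ˣ := g ^ ((p - 1) / m) with hu
  have hordu : orderOf u = m := by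
    have hdivpos : 0 < (p - 1) / m := Nat.div_pos (le_of_lt hmlt) (by omega)
    rw [hu, orderOf_pow' g (by omega), hg, hcard]
    rw [Nat.gcd_eq_right (Nat.div_dvd_of_dvd hdvd)]
    exact Nat.div_div_self hdvd (by omega)
  -- a unit outside the powers of u
  have hne_top : Subgroup.zpowers u ≠ ⊤ := by
    intro h
    have h1 : Nat.card (Subgroup.zpowers u) = m := by rw [Nat.card_zpowers, hordu]
    rw [h] at h1
    rw [Subgroup.card_top, hcard] at h1
    omega
  obtain ⟨w, hw⟩ : ∃ w : (ZMod p)ˣ, w ∉ Subgroup.zpowers u := by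
    by_contra h
    push_neg at h
    exact hne_top ((Subgroup.eq_top_iff' _).mpr h)
  set σ : ℕ := ((u : ZMod p)).val with hσ
  set τ : ℕ := ((w : ZMod p)).val with hτ
  have hσcast : ((σ : ℕ) : ZMod p) = (u : ZMod p) := by
    rw [hσ, ZMod.natCast_val, ZMod.cast_id]
  have hτcast : ((τ : ℕ) : ZMod p) = (w : ZMod p) := by
    rw [hτ, ZMod.natCast_val, ZMod.cast_id]
  have hσpos : 0 < σ := by
    rcases Nat.eq_zero_or_pos σ with h | h
    · exfalso
      have : ((u : ZMod p)) = 0 := by rw [← hσcast, h, Nat.cast_zero]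
      exact u.ne_zero this
    · exact h
  have hτpos : 0 < τ := by
    rcases Nat.eq_zero_or_pos τ with h | h
    · exfalso
      have : ((w : ZMod p)) = 0 := by rw [← hτcast, h, Nat.cast_zero]
      exact w.ne_zero this
    · exact h
  have hord : ordP p σ = m := by
    rw [ordP, hσcast, orderOf_units, hordu]
  refine ⟨p, σ, τ, ⟨hppos, hσpos, hτpos, ⟨ZMod.val_coe_unit_coprime u, ?_⟩,
    ZMod.val_coe_unit_coprime w, ?_⟩, hord⟩
  · -- fulfillment second condition
    intro i hi1 hi2
    rw [hord] at hi2
    rw [Nat.coprime_comm]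
    rw [hp.coprime_iff_not_dvd]
    intro hdvd'
    have hσi : 1 ≤ σ ^ i := Nat.one_le_pow _ _ hσpos
    have hzero : ((σ ^ i - 1 : ℕ) : ZMod p) = 0 :=
      (ZMod.natCast_eq_zero_iff _ _).mpr hdvd'
    rw [Nat.cast_sub hσi, Nat.cast_pow, Nat.cast_one, sub_eq_zero] at hzero
    have : orderOf ((σ : ℕ) : ZMod p) ∣ i := orderOf_dvd_of_pow_eq_one hzero
    have : orderOf ((σ : ℕ) : ZMod p) ≤ i := Nat.le_of_dvd (by omega) this
    have : ordP p σ ≤ i := this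
    omega
  · -- τ is not a power of σ
    intro i hi1 hi2 heq
    apply hw
    rw [hτcast, hσcast] at heq
    have : w = u ^ i := by
      apply Units.ext
      rw [Units.val_pow_eq_pow_val]
      exact heq
    rw [this]
    exact zpow_natCast u i ▸ Subgroup.zpow_mem (Subgroup.zpowers u) (Subgroup.mem_zpowers u) i
end
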